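/- arXiv:2003.00738 — 3 statements merged into one kernel-verified Lean document; each statement's English description precedes it below -/
import Mathlib

section
/- Let M be a Hilbert C*-module over the C*-algebra A = ℂ^{m×m} of m×m complex matrices, let ε ≥ 0, and let q̂ ∈ M satisfy ‖q̂‖ > ε. Then there exists b̂ ∈ ℂ^{m×m} with ‖b̂‖ < 1/ε (and b̂ arbitrary when ε = 0) such that q := q̂·b̂ is normalized, i.e., ⟨q,q⟩ is a nonzero idempotent; moreover there exists b ∈ ℂ^{m×m} such that ‖q̂ − q·b‖ ≤ ε. -/
open scoped Matrix.Norms.L2Operator ComplexOrder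

/-- A Hilbert C*-module over the C*-algebra `ℂ^{m×m}` of `m × m` complex matrices (with the
operator norm): a right module with a matrix-valued inner product inducing the norm of `M`. -/
structure HilbertModuleMat (m : ℕ) (M : Type*) [NormedAddCommGroup M] where
  smul : M → Matrix (Fin m) (Fin m) ℂ → M
  inner : M → M → Matrix (Fin m) (Fin m) ℂ
  smul_add_vec : ∀ (u v : M) c, smul (u + v) c = smul u c + smul v c
  smul_add_alg : ∀ (u : M) c d, smul u (c + d) = smul u c + smul u d
  smul_mul : ∀ (u : M) c d, smul u (c * d) = smul (smul u c) d
  smul_one : ∀ u : M, smul u 1 = u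
  inner_add_right : ∀ u v w : M, inner u (v + w) = inner u v + inner u w
  inner_smul_right : ∀ (u v : M) c, inner u (smul v c) = inner u v * c
  inner_conj : ∀ u v : M, inner v u = star (inner u v)
  inner_self_posSemidef : ∀ u : M, (inner u u).PosSemidef
  inner_definite : ∀ u : M, inner u u = 0 → u = 0
  norm_eq : ∀ u : M, ‖u‖ = Real.sqrt ‖inner u u‖

/-- A vector `q` is *normalized* if `⟨q,q⟩` is a nonzero idempotent. -/
def HilbertModuleMat.Normalized {m : ℕ} {M : Type*} [NormedAddCommGroup M]
    (h : HilbertModuleMat m M) (q : M) : Prop :=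
  h.inner q q ≠ 0 ∧ h.inner q q * h.inner q q = h.inner q q

/-!
Let `a = ⟨q̂, q̂⟩ ≥ 0` and let `p` be the spectral projection of `a` onto `(ε², ∞)`; it is
nonzero because `‖a‖ > ε²` lies in the spectrum. With `b̂ = f(a)`, where `f(x) = x^{-1/2}` on
`(ε², ∞)` and `0` elsewhere, `⟨q̂b̂, q̂b̂⟩ = b̂ a b̂ = p` and `‖b̂‖ < 1/ε`. Taking `b = √a` gives
`q̂b̂b = q̂p`, and `‖q̂ - q̂p‖² = ‖(1 - p) a (1 - p)‖ ≤ ε²`, since `(1 - p) a (1 - p)` is `a`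
restricted to its spectral subspace for `[0, ε²]`.
-/

open scoped MatrixOrder

section Cutoff

variable (ε : ℝ)

noncomputable def cutoff (x : ℝ) : ℝ := if ε ^ 2 < x then 1 else 0

noncomputable def cutoffInvSqrt (x : ℝ) : ℝ := if ε ^ 2 < x then (√x)⁻¹ else 0

variable {ε}

theorem cutoff_mul_self (x : ℝ) : cutoff ε x * cutoff ε x = cutoff ε x := by
  unfold cutoff; split_ifs <;> simp

theorem cutoffInvSqrt_mul_mul_self (x : ℝ) :
    cutoffInvSqrt ε x * x * cutoffInvSqrt ε x = cutoff ε x := by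
  unfold cutoff cutoffInvSqrt
  split_ifs with hx
  · have hx0 : 0 < x := (sq_nonneg ε).trans_lt hx
    field_simp
    exact (Real.sq_sqrt hx0.le).symm
  · simp

theorem cutoffInvSqrt_mul_sqrt (x : ℝ) : cutoffInvSqrt ε x * √x = cutoff ε x := by
  unfold cutoff cutoffInvSqrt
  split_ifs with hx
  · exact inv_mul_cancel₀ (Real.sqrt_pos.mpr ((sq_nonneg ε).trans_lt hx)).ne'
  · simp

theorem norm_cutoffInvSqrt_lt (hε : 0 < ε) (x : ℝ) : ‖cutoffInvSqrt ε x‖ < 1 / ε := by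
  unfold cutoffInvSqrt
  split_ifs with hx
  · have hεx : ε < √x := Real.lt_sqrt hε.le |>.mpr hx
    rw [Real.norm_of_nonneg (by positivity), one_div]
    exact inv_strictAnti₀ hε hεx
  · simpa using hε

theorem norm_one_sub_cutoff_mul_mul_self_le {x : ℝ} (hx : 0 ≤ x) :
    ‖(1 - cutoff ε x) * x * (1 - cutoff ε x)‖ ≤ ε ^ 2 := by
  unfold cutoff
  split_ifs with hεx
  · simp [sq_nonneg]
  · simpa [Real.norm_of_nonneg hx] using hεx

end Cutoff

section CFC

variable {A : Type*} [CStarAlgebra A]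

theorem star_cfc_mul_mul_cfc (g : ℝ → ℝ) {a : A} (ha : IsSelfAdjoint a)
    (hg : ContinuousOn g (spectrum ℝ a)) :
    star (cfc g a) * a * cfc g a = cfc (fun x => g x * x * g x) a := by
  rw [(cfc_predicate g a).star_eq, cfc_mul _ g a (by fun_prop) hg, cfc_mul g _ a hg,
    cfc_id' ℝ a]

theorem norm_cfc_cutoffInvSqrt_lt {ε : ℝ} (hε : 0 < ε) (a : A) :
    ‖cfc (cutoffInvSqrt ε) a‖ < 1 / ε :=
  norm_cfc_lt (by positivity) fun x _ => norm_cutoffInvSqrt_lt hε x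

variable {ε : ℝ} {a : A} [Finite (spectrum ℝ a)]

theorem star_cfc_cutoffInvSqrt_mul_mul (ha : IsSelfAdjoint a) :
    star (cfc (cutoffInvSqrt ε) a) * a * cfc (cutoffInvSqrt ε) a = cfc (cutoff ε) a := by
  rw [star_cfc_mul_mul_cfc _ ha ((Set.toFinite _).continuousOn _)]
  simp only [cutoffInvSqrt_mul_mul_self]

theorem cfc_cutoffInvSqrt_mul_cfc_sqrt :
    cfc (cutoffInvSqrt ε) a * cfc Real.sqrt a = cfc (cutoff ε) a := by
  rw [← cfc_mul _ _ a ((Set.toFinite _).continuousOn _)]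
  simp only [cutoffInvSqrt_mul_sqrt]

theorem isIdempotentElem_cfc_cutoff : IsIdempotentElem (cfc (cutoff ε) a) := by
  rw [IsIdempotentElem, ← cfc_mul _ _ a ((Set.toFinite _).continuousOn _)
    ((Set.toFinite _).continuousOn _)]
  simp only [cutoff_mul_self]

theorem cfc_cutoff_ne_zero [PartialOrder A] [StarOrderedRing A] (ha : 0 ≤ a)
    (hεa : ε ^ 2 < ‖a‖) : cfc (cutoff ε) a ≠ 0 := by
  have : Nontrivial A := nontrivial_of_ne a 0 (norm_pos_iff.mp ((sq_nonneg ε).trans_lt hεa))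
  have hmem : ‖a‖ ∈ spectrum ℝ a := CStarAlgebra.norm_mem_spectrum_of_nonneg ha
  intro h0
  rw [← cfc_zero ℝ a] at h0
  simpa [cutoff, hεa] using eqOn_of_cfc_eq_cfc h0 ((Set.toFinite _).continuousOn _)
    ((Set.toFinite _).continuousOn _) ha.isSelfAdjoint hmem

theorem norm_star_one_sub_cfc_cutoff_mul_mul_le [PartialOrder A] [StarOrderedRing A]
    (ha : 0 ≤ a) :
    ‖star (1 - cfc (cutoff ε) a) * a * (1 - cfc (cutoff ε) a)‖ ≤ ε ^ 2 := by
  rw [← cfc_one ℝ a, ← cfc_sub _ _ a (by fun_prop) ((Set.toFinite _).continuousOn _),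
    star_cfc_mul_mul_cfc _ ha.isSelfAdjoint ((Set.toFinite _).continuousOn _)]
  exact norm_cfc_le (sq_nonneg ε) fun x hx =>
    norm_one_sub_cutoff_mul_mul_self_le (spectrum_nonneg_of_nonneg ha hx)

end CFC

namespace HilbertModuleMat

variable {m : ℕ} {M : Type*} [NormedAddCommGroup M] (h : HilbertModuleMat m M)

theorem inner_smul_left (u v : M) (c : Matrix (Fin m) (Fin m) ℂ) :
    h.inner (h.smul u c) v = star c * h.inner u v := by
  rw [h.inner_conj, h.inner_smul_right, star_mul, ← h.inner_conj]

theorem inner_smul_smul_self (u : M) (c : Matrix (Fin m) (Fin m) ℂ) :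
    h.inner (h.smul u c) (h.smul u c) = star c * h.inner u u * c := by
  rw [h.inner_smul_right, h.inner_smul_left, mul_assoc]

theorem norm_smul (u : M) (c : Matrix (Fin m) (Fin m) ℂ) :
    ‖h.smul u c‖ = √‖star c * h.inner u u * c‖ := by
  rw [h.norm_eq, h.inner_smul_smul_self]

theorem smul_one_sub (u : M) (c : Matrix (Fin m) (Fin m) ℂ) :
    h.smul u (1 - c) = u - h.smul u c := by
  rw [eq_sub_iff_add_eq, ← h.smul_add_alg, sub_add_cancel, h.smul_one]

theorem inner_self_nonneg (u : M) : 0 ≤ h.inner u u :=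
  (h.inner_self_posSemidef u).nonneg

end HilbertModuleMat

theorem exists_normalizer_general
    {m : ℕ} {M : Type*} [NormedAddCommGroup M]
    (h : HilbertModuleMat m M) (ε : ℝ) (hε : 0 ≤ ε) (qhat : M) (hq : ε < ‖qhat‖) :
    ∃ bhat : Matrix (Fin m) (Fin m) ℂ,
      (ε ≠ 0 → ‖bhat‖ < 1 / ε) ∧
      h.Normalized (h.smul qhat bhat) ∧
      ∃ b : Matrix (Fin m) (Fin m) ℂ, ‖qhat - h.smul (h.smul qhat bhat) b‖ ≤ ε := by
  set a := h.inner qhat qhat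
  have ha : 0 ≤ a := h.inner_self_nonneg qhat
  have hεa : ε ^ 2 < ‖a‖ := by
    rwa [h.norm_eq, Real.lt_sqrt hε] at hq
  refine ⟨cfc (cutoffInvSqrt ε) a, fun hε0 => norm_cfc_cutoffInvSqrt_lt
    (hε.lt_of_ne' hε0) a, ?_, cfc Real.sqrt a, ?_⟩
  · rw [HilbertModuleMat.Normalized, h.inner_smul_smul_self,
      star_cfc_cutoffInvSqrt_mul_mul ha.isSelfAdjoint]
    exact ⟨cfc_cutoff_ne_zero ha hεa, isIdempotentElem_cfc_cutoff⟩
  · rw [← h.smul_mul, cfc_cutoffInvSqrt_mul_cfc_sqrt, ← h.smul_one_sub, h.norm_smul]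
    calc √‖star (1 - cfc (cutoff ε) a) * a * (1 - cfc (cutoff ε) a)‖
        ≤ √(ε ^ 2) := Real.sqrt_le_sqrt (norm_star_one_sub_cfc_cutoff_mul_mul_le ha)
      _ = ε := Real.sqrt_sq hε

/-- Normalization in a Hilbert C*-module over `ℂ^{m×m}`: if `‖q̂‖ > ε ≥ 0`, there is a matrix
`b̂` of norm `< 1/ε` (condition vacuous when `ε = 0`) such that `q := q̂·b̂` is normalized,
and a matrix `b` with `‖q̂ − q·b‖ ≤ ε`. -/
theorem exists_normalizer
    {m : ℕ} {M : Type*} [NormedAddCommGroup M] [CompleteSpace M]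
    (h : HilbertModuleMat m M) (ε : ℝ) (hε : 0 ≤ ε) (qhat : M) (hq : ε < ‖qhat‖) :
    ∃ bhat : Matrix (Fin m) (Fin m) ℂ,
      (ε ≠ 0 → ‖bhat‖ < 1 / ε) ∧
      h.Normalized (h.smul qhat bhat) ∧
      ∃ b : Matrix (Fin m) (Fin m) ℂ, ‖qhat - h.smul (h.smul qhat bhat) b‖ ≤ ε :=
  exists_normalizer_general h ε hε qhat hq
end

section
/- Let X be a set and k̃ : X × X → ℂ a positive definite kernel. Define k : X^m × X^m → ℂ^{m×m} by setting the (i,j)-entry of k(x,y) equal to k̃(x_i, y_j). Then k is a ℂ^{m×m}-valued positive definite kernel: k(x,y) = k(y,x)* for all x, y, and for all n, all c_1,…,c_n ∈ ℂ^{m×m} and x_1,…,x_n ∈ X^m, the matrix Σ_{s,t} c_s* k(x_s,x_t) c_t is positive semidefinite. -/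
/-!
Flattening the families `c s ∈ ℂ^{m×m}` and `x s ∈ X^m` along the index set `Fin n × Fin m`
writes `Σ_{s,t} c_sᴴ k(x_s, x_t) c_t` as `Cᴴ G C`, where `G` is the Gram matrix of `k̃` at the
`n m` points `x_{s,i}` and `C` stacks the `c_s` on top of each other. Positive definiteness of
`k̃` says exactly that `G` is positive semidefinite, and congruence preserves this.
-/

open Matrix
open scoped ComplexOrder

section Kernel

variable {X : Type*} {k : X → X → ℂ}

theorem conjTranspose_of_kernel (hherm : ∀ x y, k x y = (starRingEnd ℂ) (k y x))
    {ι κ : Type*} (x : ι → X) (y : κ → X) :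
    (Matrix.of fun i j => k (x i) (y j))ᴴ = Matrix.of fun i j => k (y i) (x j) := by
  ext i j
  simp [hherm (y i) (x j)]

theorem kernel_quadForm_nonneg
    (hpos : ∀ (n : ℕ) (c : Fin n → ℂ) (x : Fin n → X),
      0 ≤ ∑ s, ∑ t, (starRingEnd ℂ) (c s) * c t * k (x s) (x t))
    {ι : Type*} [Fintype ι] (c : ι → ℂ) (x : ι → X) :
    0 ≤ ∑ s, ∑ t, (starRingEnd ℂ) (c s) * c t * k (x s) (x t) := by
  let e := Fintype.equivFin ι
  simpa only [← e.symm.sum_comp, Function.comp_apply] using hpos _ (c ∘ e.symm) (x ∘ e.symm)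

theorem posSemidef_kernel_gram (hherm : ∀ x y, k x y = (starRingEnd ℂ) (k y x))
    (hpos : ∀ (n : ℕ) (c : Fin n → ℂ) (x : Fin n → X),
      0 ≤ ∑ s, ∑ t, (starRingEnd ℂ) (c s) * c t * k (x s) (x t))
    {ι : Type*} [Fintype ι] (x : ι → X) :
    (Matrix.of fun a b => k (x a) (x b)).PosSemidef := by
  refine PosSemidef.of_dotProduct_mulVec_nonneg (conjTranspose_of_kernel hherm x x) fun c => ?_
  convert kernel_quadForm_nonneg hpos c x using 1
  simp only [dotProduct, mulVec, Pi.star_apply, of_apply, Finset.mul_sum, starRingEnd_apply]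
  refine Finset.sum_congr rfl fun s _ => Finset.sum_congr rfl fun t _ => ?_
  ring

end Kernel

theorem sum_conjTranspose_mul_mul_eq_flatten {R ι κ n : Type*}
    [NonUnitalNonAssocSemiring R] [Star R] [Fintype ι] [Fintype κ]
    (c : ι → Matrix κ n R) (K : ι → ι → Matrix κ κ R) :
    ∑ s, ∑ t, (c s)ᴴ * K s t * c t =
      (Matrix.of fun (p : ι × κ) j => c p.1 p.2 j)ᴴ *
        (Matrix.of fun (p q : ι × κ) => K p.1 q.1 p.2 q.2) *
          Matrix.of fun (p : ι × κ) j => c p.1 p.2 j := by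
  ext a b
  simp only [Matrix.sum_apply, mul_apply, conjTranspose_apply, of_apply, Fintype.sum_prod_type,
    Finset.sum_mul]
  rw [Finset.sum_comm]
  exact Finset.sum_congr rfl fun t _ => Finset.sum_comm

/-- If `k̃` is a ℂ-valued positive definite kernel on `X`, then the `ℂ^{m×m}`-valued kernel
`k(x,y)_{i,j} = k̃(x_i, y_j)` on `X^m` is positive definite: it is Hermitian-symmetric and
`Σ_{s,t} c_s* k(x_s,x_t) c_t` is positive semidefinite for all finite families. -/
theorem matrix_kernel_posdef
    {X : Type*} (m : ℕ) (ktilde : X → X → ℂ)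
    (hherm : ∀ x y, ktilde x y = (starRingEnd ℂ) (ktilde y x))
    (hpos : ∀ (n : ℕ) (c : Fin n → ℂ) (x : Fin n → X),
      0 ≤ ∑ s, ∑ t, (starRingEnd ℂ) (c s) * c t * ktilde (x s) (x t)) :
    (∀ x y : Fin m → X,
      (Matrix.of fun i j => ktilde (x i) (y j)) =
        (Matrix.of fun i j => ktilde (y i) (x j))ᴴ) ∧
    (∀ (n : ℕ) (c : Fin n → Matrix (Fin m) (Fin m) ℂ) (x : Fin n → (Fin m → X)),
      (∑ s, ∑ t,
        (c s)ᴴ * (Matrix.of fun i j => ktilde (x s i) (x t j)) * c t).PosSemidef) := by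
  refine ⟨fun x y => (conjTranspose_of_kernel hherm y x).symm, fun n c x => ?_⟩
  rw [sum_conjTranspose_mul_mul_eq_flatten]
  exact (posSemidef_kernel_gram hherm hpos fun p : Fin n × Fin m => x p.1 p.2)
    |>.conjTranspose_mul_mul_same _
end

section
/- Let k̃ be a complex-valued positive definite kernel on X with feature map φ̃ such that {φ̃(x) : x ∈ X} is linearly independent in the RKHS H_{k̃}. Let k be the ℂ^{m×m}-valued kernel with (i,j)-entry k̃(x_i, y_j) and φ its feature map into the RKHM M_k. If Y ⊆ X^m is a set of tuples such that all components of all elements of Y are pairwise distinct (x_{s,i} ≠ x_{t,j} whenever (s,i) ≠ (t,j)), then {φ(x) : x ∈ Y} is ℂ^{m×m}-linearly independent: Σ_t φ(x_t)c_t = 0 with c_t ∈ ℂ^{m×m} implies all c_t = 0. -/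
open scoped ComplexOrder

/-- If the scalar features `{φ̃(x)}_{x∈X}` are linearly independent (expressed via the
reproducing property: any finite combination vanishing as a function has zero coefficients),
and `Y ⊆ X^m` consists of tuples whose components are globally pairwise distinct, then the
matrix features `{φ(x)}_{x∈Y}` of the kernel `k(x,y)_{i,j} = k̃(x_i,y_j)` are
`ℂ^{m×m}`-linearly independent (again expressed via the reproducing property). -/
theorem matrix_features_linear_independent
    {X : Type*} (m : ℕ) (ktilde : X → X → ℂ)
    (hherm : ∀ x y, ktilde x y = (starRingEnd ℂ) (ktilde y x))
    (hpos : ∀ (n : ℕ) (c : Fin n → ℂ) (x : Fin n → X),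
      0 ≤ ∑ s, ∑ t, (starRingEnd ℂ) (c s) * c t * ktilde (x s) (x t))
    (hindep : ∀ (n : ℕ) (x : Fin n → X), Function.Injective x →
      ∀ c : Fin n → ℂ, (∀ y, ∑ t, c t * ktilde y (x t) = 0) → ∀ t, c t = 0)
    (Y : Set (Fin m → X))
    (hY : ∀ x ∈ Y, ∀ x' ∈ Y, ∀ i j, x i = x' j → x = x' ∧ i = j)
    (n : ℕ) (xs : Fin n → (Fin m → X)) (hxs : ∀ t, xs t ∈ Y)
    (hinj : Function.Injective xs)
    (c : Fin n → Matrix (Fin m) (Fin m) ℂ)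
    (hzero : ∀ y : Fin m → X,
      ∑ t, (Matrix.of fun i j => ktilde (y i) (xs t j)) * c t = 0) :
    ∀ t, c t = 0 := by
  intro t
  ext i l
  let e : Fin n × Fin m ≃ Fin (n * m) := finProdFinEquiv
  have hptinj : Function.Injective (fun p : Fin n × Fin m => xs p.1 p.2) := by
    rintro ⟨t1, j1⟩ ⟨t2, j2⟩ h
    obtain ⟨h1, h2⟩ := hY _ (hxs t1) _ (hxs t2) j1 j2 h
    exact Prod.ext (hinj h1) h2
  have key := hindep (n * m) (fun s => xs (e.symm s).1 (e.symm s).2)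
    (fun s1 s2 h => e.symm.injective (hptinj h))
    (fun s => c (e.symm s).1 (e.symm s).2 l)
    (by
      intro y
      have hsum : ∑ s : Fin (n * m),
          c (e.symm s).1 (e.symm s).2 l * ktilde y (xs (e.symm s).1 (e.symm s).2)
          = ∑ p : Fin n × Fin m, c p.1 p.2 l * ktilde y (xs p.1 p.2) :=
        Equiv.sum_comp e.symm (fun p => c p.1 p.2 l * ktilde y (xs p.1 p.2))
      rw [hsum, Fintype.sum_prod_type]
      have h0 := congrFun (congrFun (hzero (fun _ => y)) i) l
      simp only [Matrix.sum_apply, Matrix.mul_apply, Matrix.of_apply,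
        Matrix.zero_apply] at h0
      rw [← h0]
      exact Finset.sum_congr rfl fun t' _ => Finset.sum_congr rfl fun j _ => mul_comm _ _)
  have := key (e (t, i))
  simpa using this
end
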